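/- arXiv:2602.02541 — 2 statements merged into one kernel-verified Lean document; each statement's English description precedes it below -/
import Mathlib

section
/- Let P be an n×n row-stochastic real matrix and φ ∈ ℝⁿ a strictly positive vector with φᵀ P = φᵀ and 𝟙ᵀ φ = 1. Let Φ = diag(φ) and define L := I − (1/2)(Φ^{1/2} P Φ^{−1/2} + Φ^{−1/2} Pᵀ Φ^{1/2}). Then L is symmetric, and for every f ∈ ℝⁿ, writing g := Φ^{−1/2} f, one has fᵀ L f = (1/2) ∑_{i,j} φᵢ P_{ij} (gᵢ − gⱼ)². In particular L is positive semidefinite. -/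
open Matrix

/-- The BoP Laplacian `L = I - ½(Φ^{1/2} P Φ^{-1/2} + Φ^{-1/2} Pᵀ Φ^{1/2})`,
where `Φ = diag(φ)`. -/
noncomputable def bopLaplacian {n : ℕ} (P : Matrix (Fin n) (Fin n) ℝ)
    (φ : Fin n → ℝ) : Matrix (Fin n) (Fin n) ℝ :=
  1 - (1 / 2 : ℝ) •
    (Matrix.diagonal (fun i => Real.sqrt (φ i)) * P *
        Matrix.diagonal (fun i => (Real.sqrt (φ i))⁻¹) +
      Matrix.diagonal (fun i => (Real.sqrt (φ i))⁻¹) * Pᵀ *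
        Matrix.diagonal (fun i => Real.sqrt (φ i)))

/-!
Conjugating `P` by `Φ^{1/2}` turns the quadratic form of `L` in `f` into
`∑ φᵢ gᵢ² - ∑ φᵢ P_{ij} gᵢ gⱼ` with `g = Φ^{-1/2} f`. Expanding `(gᵢ - gⱼ)²`, the two square
terms of the Dirichlet form both reduce to `∑ φᵢ gᵢ²`: one because the rows of `P` sum to `1`,
the other because `φ` is stationary.
-/

open Finset

namespace Matrix

variable {ι R : Type*}

theorem isSymm_one_sub_smul_add_transpose [CommRing R] [DecidableEq ι] (c : R)
    (A : Matrix ι ι R) : (1 - c • (A + Aᵀ)).IsSymm := by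
  simp only [IsSymm, transpose_sub, transpose_one, transpose_smul, transpose_add,
    transpose_transpose, add_comm]

variable [Fintype ι]

theorem sum_mul_sub_sq_eq_of_stationary [CommRing R] {P : Matrix ι ι R} {φ : ι → R}
    (hrow : ∀ i, ∑ j, P i j = 1) (hstat : φ ᵥ* P = φ) (g : ι → R) :
    ∑ i, ∑ j, φ i * P i j * (g i - g j) ^ 2 =
      2 * (∑ i, φ i * g i ^ 2 - ∑ i, ∑ j, φ i * P i j * (g i * g j)) := by
  have hsrc : ∑ i, ∑ j, φ i * P i j * g i ^ 2 = ∑ i, φ i * g i ^ 2 := by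
    refine sum_congr rfl fun i _ => ?_
    rw [← sum_mul, ← mul_sum, hrow, mul_one]
  have htgt : ∑ i, ∑ j, φ i * P i j * g j ^ 2 = ∑ j, φ j * g j ^ 2 := by
    rw [sum_comm]
    refine sum_congr rfl fun j _ => ?_
    rw [← sum_mul]
    exact congrArg (· * g j ^ 2) (congrFun hstat j)
  calc ∑ i, ∑ j, φ i * P i j * (g i - g j) ^ 2
      = ∑ i, ∑ j, (φ i * P i j * g i ^ 2 + φ i * P i j * g j ^ 2
          - 2 * (φ i * P i j * (g i * g j))) :=
        sum_congr rfl fun i _ => sum_congr rfl fun j _ => by ring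
    _ = _ := by
        simp only [sum_add_distrib, sum_sub_distrib, ← mul_sum]
        rw [hsrc, htgt]
        ring

theorem dotProduct_one_sub_smul_add_transpose_mulVec [CommRing R] [DecidableEq ι] (c : R)
    (A : Matrix ι ι R) (f : ι → R) :
    f ⬝ᵥ ((1 - c • (A + Aᵀ)) *ᵥ f) = f ⬝ᵥ f - 2 * c * (f ⬝ᵥ (A *ᵥ f)) := by
  have htr : f ⬝ᵥ (Aᵀ *ᵥ f) = f ⬝ᵥ (A *ᵥ f) := by
    rw [dotProduct_mulVec, vecMul_transpose, dotProduct_comm]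
  rw [sub_mulVec, one_mulVec, smul_mulVec, add_mulVec, dotProduct_sub, dotProduct_smul,
    dotProduct_add, htr, smul_eq_mul]
  ring

section Conjugation

variable [Field R] [DecidableEq ι] {s : ι → R} (hs : ∀ i, s i ≠ 0) (f : ι → R)
include hs

theorem mul_diagonal_inv_mulVec_apply (i : ι) :
    s i * (diagonal (fun k => (s k)⁻¹) *ᵥ f) i = f i := by
  rw [mulVec_diagonal, mul_inv_cancel_left₀ (hs i)]

theorem dotProduct_self_eq_sum_sq_mul_diagonal_inv_mulVec :
    f ⬝ᵥ f = ∑ i, s i ^ 2 * (diagonal (fun k => (s k)⁻¹) *ᵥ f) i ^ 2 := by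
  refine sum_congr rfl fun i _ => ?_
  rw [← mul_pow, mul_diagonal_inv_mulVec_apply hs, sq]

theorem dotProduct_diagonal_mul_mul_diagonal_inv_mulVec (M : Matrix ι ι R) :
    f ⬝ᵥ ((diagonal s * M * diagonal (fun k => (s k)⁻¹)) *ᵥ f) =
      ∑ i, ∑ j, s i ^ 2 * M i j *
        ((diagonal (fun k => (s k)⁻¹) *ᵥ f) i * (diagonal (fun k => (s k)⁻¹) *ᵥ f) j) := by
  set g := diagonal (fun k => (s k)⁻¹) *ᵥ f
  have hf : f = fun i => s i * g i := funext fun i => (mul_diagonal_inv_mulVec_apply hs f i).symm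
  conv_lhs => rw [hf]
  simp only [dotProduct, mulVec, diagonal_mul, mul_diagonal, mul_sum]
  refine sum_congr rfl fun i _ => sum_congr rfl fun j _ => ?_
  field_simp [hs j]

end Conjugation

end Matrix

theorem bopLaplacian_eq {n : ℕ} (P : Matrix (Fin n) (Fin n) ℝ) (φ : Fin n → ℝ) :
    bopLaplacian P φ = 1 - (1 / 2 : ℝ) • (diagonal (fun i => √(φ i)) * P *
      diagonal (fun i => (√(φ i))⁻¹) +
        (diagonal (fun i => √(φ i)) * P * diagonal (fun i => (√(φ i))⁻¹))ᵀ) := by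
  simp only [bopLaplacian, transpose_mul, diagonal_transpose, Matrix.mul_assoc]

theorem stmt12_general {n : ℕ} (P : Matrix (Fin n) (Fin n) ℝ)
    (hP : ∀ i j, 0 ≤ P i j) (hrow : ∀ i, ∑ j, P i j = 1)
    (φ : Fin n → ℝ) (hφ : ∀ i, 0 < φ i)
    (hstat : φ ᵥ* P = φ) :
    (bopLaplacian P φ).IsSymm ∧
    (∀ f : Fin n → ℝ,
      f ⬝ᵥ (bopLaplacian P φ *ᵥ f) =
        (1 / 2) * ∑ i, ∑ j, φ i * P i j *
          (((Matrix.diagonal (fun k => (Real.sqrt (φ k))⁻¹) *ᵥ f) i -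
            (Matrix.diagonal (fun k => (Real.sqrt (φ k))⁻¹) *ᵥ f) j) ^ 2)) ∧
    (bopLaplacian P φ).PosSemidef := by
  have hs : ∀ i, √(φ i) ≠ 0 := fun i => (Real.sqrt_pos.2 (hφ i)).ne'
  have hsq : ∀ i, √(φ i) ^ 2 = φ i := fun i => Real.sq_sqrt (hφ i).le
  have hsymm : (bopLaplacian P φ).IsSymm := by
    rw [bopLaplacian_eq]
    exact isSymm_one_sub_smul_add_transpose _ _
  have hform : ∀ f : Fin n → ℝ, f ⬝ᵥ (bopLaplacian P φ *ᵥ f) =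
      (1 / 2) * ∑ i, ∑ j, φ i * P i j *
        (((diagonal (fun k => (√(φ k))⁻¹) *ᵥ f) i -
          (diagonal (fun k => (√(φ k))⁻¹) *ᵥ f) j) ^ 2) := by
    intro f
    rw [sum_mul_sub_sq_eq_of_stationary hrow hstat, bopLaplacian_eq,
      dotProduct_one_sub_smul_add_transpose_mulVec,
      dotProduct_diagonal_mul_mul_diagonal_inv_mulVec hs,
      dotProduct_self_eq_sum_sq_mul_diagonal_inv_mulVec hs]
    simp only [hsq]
    ring
  refine ⟨hsymm, hform,
    posSemidef_iff_dotProduct_mulVec.2 ⟨isHermitian_iff_isSymm.2 hsymm, fun f => ?_⟩⟩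
  rw [star_trivial, hform]
  exact mul_nonneg (by norm_num) (sum_nonneg fun i _ => sum_nonneg fun j _ =>
    mul_nonneg (mul_nonneg (hφ i).le (hP i j)) (sq_nonneg _))

/-- **exact Dirichlet-form identity.** Let `P` be row-stochastic with
stationary distribution `φ > 0`.  Then the BoP Laplacian `L` is symmetric, its quadratic
form satisfies `fᵀ L f = ½ ∑_{i,j} φᵢ P_{ij} (gᵢ - gⱼ)²` where `g = Φ^{-1/2} f`, and in
particular `L` is positive semidefinite. -/
theorem stmt12 {n : ℕ} (P : Matrix (Fin n) (Fin n) ℝ)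
    (hP : ∀ i j, 0 ≤ P i j) (hrow : ∀ i, ∑ j, P i j = 1)
    (φ : Fin n → ℝ) (hφ : ∀ i, 0 < φ i)
    (hstat : φ ᵥ* P = φ) (hφsum : ∑ i, φ i = 1) :
    (bopLaplacian P φ).IsSymm ∧
    (∀ f : Fin n → ℝ,
      f ⬝ᵥ (bopLaplacian P φ *ᵥ f) =
        (1 / 2) * ∑ i, ∑ j, φ i * P i j *
          (((Matrix.diagonal (fun k => (Real.sqrt (φ k))⁻¹) *ᵥ f) i -
            (Matrix.diagonal (fun k => (Real.sqrt (φ k))⁻¹) *ᵥ f) j) ^ 2)) ∧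
    (bopLaplacian P φ).PosSemidef :=
  stmt12_general P hP hrow φ hφ hstat
end

section
/- Let P be an n×n row-stochastic real matrix whose directed graph (edges i → j wherever P_{ij} > 0) is strongly connected, and let φ ∈ ℝⁿ be strictly positive with φᵀ P = φᵀ and 𝟙ᵀ φ = 1. Let Φ = diag(φ) and L := I − (1/2)(Φ^{1/2} P Φ^{−1/2} + Φ^{−1/2} Pᵀ Φ^{1/2}). Then the kernel of L is exactly the one-dimensional subspace spanned by the vector Φ^{1/2} 𝟙 (the vector with coordinates √φᵢ). -/
open Matrix

/-- **kernel of the BoP Laplacian.** Let `P` be row-stochastic whose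
directed graph (edges where `P i j > 0`) is strongly connected (for all `i j` there is a
directed path, i.e. some power `Pᵏ` has `(Pᵏ) i j > 0`), and let `φ > 0` be a stationary
distribution.  Then the kernel of the BoP Laplacian is exactly the span of the vector
`Φ^{1/2} 𝟙 = (√φᵢ)ᵢ`. -/
theorem stmt13 {n : ℕ} (P : Matrix (Fin n) (Fin n) ℝ)
    (hP : ∀ i j, 0 ≤ P i j) (hrow : ∀ i, ∑ j, P i j = 1)
    (hconn : ∀ i j : Fin n, ∃ k : ℕ, 0 < k ∧ 0 < (P ^ k) i j)
    (φ : Fin n → ℝ) (hφ : ∀ i, 0 < φ i)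
    (hstat : φ ᵥ* P = φ) (hφsum : ∑ i, φ i = 1) :
    ∀ x : Fin n → ℝ,
      bopLaplacian P φ *ᵥ x = 0 ↔
        ∃ c : ℝ, x = c • fun i => Real.sqrt (φ i) := by
  have hs : ∀ i, 0 < Real.sqrt (φ i) := fun i => Real.sqrt_pos.mpr (hφ i)
  have hsne : ∀ i, Real.sqrt (φ i) ≠ 0 := fun i => (hs i).ne'
  have hsq : ∀ i, Real.sqrt (φ i) * Real.sqrt (φ i) = φ i :=
    fun i => Real.mul_self_sqrt (hφ i).le
  have hcol : ∀ j, ∑ i, φ i * P i j = φ j := by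
    intro j
    have := congrFun hstat j
    simpa [vecMul, dotProduct] using this
  have hrw : ∀ i, ∑ j, φ i * P i j = φ i := by
    intro i; rw [← Finset.mul_sum, hrow, mul_one]
  -- entrywise formula for L *ᵥ z
  have hLapp : ∀ (z : Fin n → ℝ) (i : Fin n), (bopLaplacian P φ *ᵥ z) i =
      z i - (1 / 2 : ℝ) *
        ((∑ j, Real.sqrt (φ i) * P i j * (Real.sqrt (φ j))⁻¹ * z j) +
          ∑ j, (Real.sqrt (φ i))⁻¹ * P j i * Real.sqrt (φ j) * z j) := by
    intro z i
    have expand : (bopLaplacian P φ *ᵥ z) i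
        = ∑ j, ((if i = j then (1 : ℝ) else 0)
            - (1 / 2 : ℝ) * (Real.sqrt (φ i) * P i j * (Real.sqrt (φ j))⁻¹
                + (Real.sqrt (φ i))⁻¹ * P j i * Real.sqrt (φ j))) * z j := by
      simp only [bopLaplacian, Matrix.mulVec, dotProduct, Matrix.sub_apply,
        Matrix.smul_apply, Matrix.add_apply, Matrix.one_apply, Matrix.mul_diagonal,
        Matrix.diagonal_mul, Matrix.transpose_apply, smul_eq_mul]
    rw [expand]
    have split : ∀ j : Fin n, ((if i = j then (1 : ℝ) else 0)
          - (1 / 2 : ℝ) * (Real.sqrt (φ i) * P i j * (Real.sqrt (φ j))⁻¹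
              + (Real.sqrt (φ i))⁻¹ * P j i * Real.sqrt (φ j))) * z j
        = (if i = j then z j else 0)
          - ((1 / 2 : ℝ) * (Real.sqrt (φ i) * P i j * (Real.sqrt (φ j))⁻¹ * z j)
            + (1 / 2 : ℝ) * ((Real.sqrt (φ i))⁻¹ * P j i * Real.sqrt (φ j) * z j)) := by
      intro j; split <;> ring
    rw [Finset.sum_congr rfl fun j _ => split j, Finset.sum_sub_distrib,
      Finset.sum_add_distrib, ← Finset.mul_sum, ← Finset.mul_sum]
    simp only [Finset.sum_ite_eq, Finset.mem_univ, if_true]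
    ring
  intro x
  constructor
  · intro hL
    set y : Fin n → ℝ := fun i => x i / Real.sqrt (φ i) with hy
    have hxy : ∀ i, x i = Real.sqrt (φ i) * y i := by
      intro i; simp only [hy]
      rw [mul_comm, div_mul_cancel₀ _ (hsne i)]
    have hx2 : ∀ i, x i * x i = φ i * y i ^ 2 := by
      intro i
      rw [hxy i]
      have h1 := hsq i
      generalize Real.sqrt (φ i) = a at h1 ⊢
      rw [← h1]; ring
    have t1 : ∀ i j, x i * (Real.sqrt (φ i) * P i j * (Real.sqrt (φ j))⁻¹ * x j)
        = φ i * P i j * (y i * y j) := by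
      intro i j
      rw [hxy i, hxy j]
      have h1 := hsq i; have h2 := hsq j
      have n1 := hsne i; have n2 := hsne j
      generalize Real.sqrt (φ i) = a at h1 n1 ⊢
      generalize Real.sqrt (φ j) = b at h2 n2 ⊢
      rw [← h1]; field_simp
    have t2 : ∀ i j, x i * ((Real.sqrt (φ i))⁻¹ * P j i * Real.sqrt (φ j) * x j)
        = φ j * P j i * (y j * y i) := by
      intro i j
      rw [hxy i, hxy j]
      have h1 := hsq i; have h2 := hsq j
      have n1 := hsne i; have n2 := hsne j
      generalize Real.sqrt (φ i) = a at h1 n1 ⊢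
      generalize Real.sqrt (φ j) = b at h2 n2 ⊢
      rw [← h2]; field_simp
    have key : ∀ i, x i * ((bopLaplacian P φ *ᵥ x) i)
        = φ i * y i ^ 2 - (1 / 2 : ℝ) *
          ((∑ j, φ i * P i j * (y i * y j)) + ∑ j, φ j * P j i * (y j * y i)) := by
      intro i
      rw [hLapp x i, mul_sub, mul_left_comm, mul_add, Finset.mul_sum, Finset.mul_sum,
        Finset.sum_congr rfl fun j _ => t1 i j,
        Finset.sum_congr rfl fun j _ => t2 i j, hx2 i]
    have hswap : ∑ i, ∑ j, φ j * P j i * (y j * y i)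
        = ∑ i, ∑ j, φ i * P i j * (y i * y j) := by
      rw [Finset.sum_comm]
    have hB : x ⬝ᵥ (bopLaplacian P φ *ᵥ x)
        = (∑ i, φ i * y i ^ 2) - ∑ i, ∑ j, φ i * P i j * (y i * y j) := by
      rw [dotProduct, Finset.sum_congr rfl fun i _ => key i,
        Finset.sum_sub_distrib, ← Finset.mul_sum, Finset.sum_add_distrib, hswap]
      ring
    have h1 : ∑ i, ∑ j, φ i * P i j * y i ^ 2 = ∑ i, φ i * y i ^ 2 := by
      refine Finset.sum_congr rfl fun i _ => ?_
      rw [← Finset.sum_mul, hrw, ]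
    have h2 : ∑ i, ∑ j, φ i * P i j * y j ^ 2 = ∑ j, φ j * y j ^ 2 := by
      rw [Finset.sum_comm]
      refine Finset.sum_congr rfl fun j _ => ?_
      rw [← Finset.sum_mul, hcol]
    have hA : ∑ i, ∑ j, φ i * P i j * (y i - y j) ^ 2
        = 2 * (∑ i, φ i * y i ^ 2) - 2 * ∑ i, ∑ j, φ i * P i j * (y i * y j) := by
      have e : ∀ i j, φ i * P i j * (y i - y j) ^ 2
          = φ i * P i j * y i ^ 2 + φ i * P i j * y j ^ 2
            - 2 * (φ i * P i j * (y i * y j)) := by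
        intro i j; ring
      calc ∑ i, ∑ j, φ i * P i j * (y i - y j) ^ 2
          = ∑ i, ∑ j, (φ i * P i j * y i ^ 2 + φ i * P i j * y j ^ 2
              - 2 * (φ i * P i j * (y i * y j))) :=
            Finset.sum_congr rfl fun i _ => Finset.sum_congr rfl fun j _ => e i j
        _ = (∑ i, ∑ j, φ i * P i j * y i ^ 2) + (∑ i, ∑ j, φ i * P i j * y j ^ 2)
            - 2 * ∑ i, ∑ j, φ i * P i j * (y i * y j) := by
            simp only [Finset.sum_sub_distrib, Finset.sum_add_distrib, ← Finset.mul_sum]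
        _ = 2 * (∑ i, φ i * y i ^ 2) - 2 * ∑ i, ∑ j, φ i * P i j * (y i * y j) := by
            rw [h1, h2]; ring
    have hQ0 : x ⬝ᵥ (bopLaplacian P φ *ᵥ x) = 0 := by
      rw [hL]; simp
    have hsum0 : ∑ i, ∑ j, φ i * P i j * (y i - y j) ^ 2 = 0 := by
      have h0 : (∑ i, φ i * y i ^ 2) - ∑ i, ∑ j, φ i * P i j * (y i * y j) = 0 := by
        rw [← hB, hQ0]
      rw [hA]; linarith [h0]
    have hterm0 : ∀ i j, φ i * P i j * (y i - y j) ^ 2 = 0 := by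
      intro i j
      have hnn : ∀ i j : Fin n, 0 ≤ φ i * P i j * (y i - y j) ^ 2 := fun i j =>
        mul_nonneg (mul_nonneg (hφ i).le (hP i j)) (sq_nonneg _)
      have hrow0 := (Finset.sum_eq_zero_iff_of_nonneg
        (fun i _ => Finset.sum_nonneg fun j _ => hnn i j)).mp hsum0 i (Finset.mem_univ i)
      exact (Finset.sum_eq_zero_iff_of_nonneg fun j _ => hnn i j).mp hrow0 j
        (Finset.mem_univ j)
    have hedge : ∀ i j, 0 < P i j → y i = y j := by
      intro i j hij
      have hpos : 0 < φ i * P i j := mul_pos (hφ i) hij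
      have := (mul_eq_zero.mp (hterm0 i j)).resolve_left hpos.ne'
      have := pow_eq_zero_iff (n := 2) (by norm_num) |>.mp this
      linarith [sub_eq_zero.mp this]
    have hPk : ∀ k : ℕ, ∀ i j, 0 ≤ (P ^ k) i j := by
      intro k
      induction k with
      | zero =>
        intro i j
        rcases eq_or_ne i j with rfl | h
        · simp [Matrix.one_apply]
        · simp [Matrix.one_apply_ne h]
      | succ k ih =>
        intro i j
        rw [pow_succ', Matrix.mul_apply]
        exact Finset.sum_nonneg fun m _ => mul_nonneg (hP i m) (ih m j)
    have hstep : ∀ k : ℕ, ∀ i j, 0 < (P ^ k) i j → y i = y j := by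
      intro k
      induction k with
      | zero =>
        intro i j h
        rcases eq_or_ne i j with rfl | hne
        · rfl
        · rw [pow_zero, Matrix.one_apply_ne hne] at h
          exact absurd h (lt_irrefl 0)
      | succ k ih =>
        intro i j h
        rw [pow_succ', Matrix.mul_apply] at h
        have h0 : ∑ m : Fin n, (0 : ℝ) < ∑ m, P i m * (P ^ k) m j := by simpa using h
        obtain ⟨m, -, hm⟩ := Finset.exists_lt_of_sum_lt h0
        rcases mul_pos_iff.mp hm with ⟨h1, h2⟩ | ⟨h1, -⟩
        · exact (hedge i m h1).trans (ih m j h2)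
        · exact absurd h1 (not_lt.mpr (hP i m))
    have hyconst : ∀ i j, y i = y j := by
      intro i j
      obtain ⟨k, -, hk⟩ := hconn i j
      exact hstep k i j hk
    rcases isEmpty_or_nonempty (Fin n) with hE | hNE
    · exact ⟨0, funext fun i => isEmptyElim i⟩
    · obtain ⟨i0⟩ := hNE
      refine ⟨y i0, funext fun i => ?_⟩
      have : x i = Real.sqrt (φ i) * y i := hxy i
      simp only [Pi.smul_apply, smul_eq_mul]
      rw [this, hyconst i i0]; ring
  · rintro ⟨c, rfl⟩
    funext i
    rw [hLapp]
    simp only [Pi.smul_apply, smul_eq_mul, Pi.zero_apply]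
    have e1 : ∑ j, Real.sqrt (φ i) * P i j * (Real.sqrt (φ j))⁻¹ *
        (c * Real.sqrt (φ j)) = c * Real.sqrt (φ i) := by
      have t : ∀ j, Real.sqrt (φ i) * P i j * (Real.sqrt (φ j))⁻¹ *
          (c * Real.sqrt (φ j)) = c * Real.sqrt (φ i) * P i j := by
        intro j; field_simp [hsne j]
      rw [Finset.sum_congr rfl fun j _ => t j, ← Finset.mul_sum, hrow, mul_one]
    have e2 : ∑ j, (Real.sqrt (φ i))⁻¹ * P j i * Real.sqrt (φ j) *
        (c * Real.sqrt (φ j)) = c * Real.sqrt (φ i) := by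
      have t : ∀ j, (Real.sqrt (φ i))⁻¹ * P j i * Real.sqrt (φ j) *
          (c * Real.sqrt (φ j)) = c * (Real.sqrt (φ i))⁻¹ * (φ j * P j i) := by
        intro j
        have h2 := hsq j
        generalize Real.sqrt (φ j) = b at h2 ⊢
        rw [← h2]; ring
      rw [Finset.sum_congr rfl fun j _ => t j, ← Finset.mul_sum, hcol]
      have h1 := hsq i
      have n1 := hsne i
      generalize Real.sqrt (φ i) = a at h1 n1 ⊢
      rw [← h1]; field_simp
    rw [e1, e2]; ring
end
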